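/- arXiv:1101.3064 — 3 statements merged into one kernel-verified Lean document; each statement's English description precedes it below -/
import Mathlib

section
/- (Nerve Theorem) Let E be a category with dense generator A, and T a monad with arities A (i.e. ν_A∘T sends the canonical A-cocones of E to colimit cocones in PSh(A)). Then the full subcategory Θ_T of E^T spanned by free T-algebras on objects of A is a dense generator of E^T, and the essential image of the nerve ν_T:E^T→PSh(Θ_T) consists exactly of those presheaves whose restriction along j_T:A→Θ_T lies in the essential image of ν_A:E→PSh(A). -/
open CategoryTheory CategoryTheory.Limits

universe v u

/-- The restricted Yoneda functor `ν_A`, with its meaning in the older Mathlib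
(no `ULift`). -/
def CategoryTheory.Presheaf.restrictedYoneda {C : Type v} [SmallCategory C] {ℰ : Type u}
    [Category.{v} ℰ] (A : C ⥤ ℰ) : ℰ ⥤ Cᵒᵖ ⥤ Type v :=
  yoneda ⋙ (Functor.whiskeringLeft _ _ (Type v)).obj (Functor.op A)

def canCocone {A : Type v} [SmallCategory A] {E : Type u} [Category.{v} E]
    (i : A ⥤ E) (X : E) : Cocone (CostructuredArrow.proj i X ⋙ i) where
  pt := X
  ι :=
    { app := fun f => f.hom
      naturality := fun f g m => (CostructuredArrow.w m).trans (Category.comp_id _).symm }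

variable {A : Type v} [SmallCategory A] {E : Type u} [Category.{v} E]

/-- `Θ_T`: the full subcategory of `E^T` spanned by free `T`-algebras on objects
of `A`, presented so that the restricted free algebra functor `j_T` is
bijective (indeed the identity) on objects. -/
def ThetaT (i : A ⥤ E) (T : Monad E) : Type v :=
  InducedCategory T.Algebra (fun a => T.free.obj (i.obj a))

instance (i : A ⥤ E) (T : Monad E) : Category.{v} (ThetaT i T) :=
  InducedCategory.instCategory

/-- The fully faithful inclusion `i_T : Θ_T ⥤ E^T`. -/
def iT (i : A ⥤ E) (T : Monad E) : ThetaT i T ⥤ T.Algebra :=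
  inducedFunctor _

/-- The restricted free algebra functor `j_T : A ⥤ Θ_T`, bijective on objects. -/
def jT (i : A ⥤ E) (T : Monad E) : A ⥤ ThetaT i T where
  obj a := a
  map f := InducedCategory.homMk (T.free.map (i.map f))
  map_id a := by
    refine InducedCategory.hom_ext ?_
    change T.free.map (i.map (𝟙 a)) = 𝟙 _
    simp
  map_comp f g := by
    refine InducedCategory.hom_ext ?_
    change T.free.map (i.map (f ≫ g)) = T.free.map (i.map f) ≫ T.free.map (i.map g)
    simp

/-!
Transposing along the free–forgetful adjunction identifies `Θ_T(j_T b, j_T a)` with Kleisli maps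
`i b ⟶ T (i a)`, and the restriction of `ν_T X` along `j_T` with `ν_A (U X)`. By density a map
out of an object of `E` is determined by its composites with the generalized elements `i b ⟶ _`,
and by the arity condition every `i b ⟶ T X` factors as `v ≫ T.map x` with `x : i a ⟶ X` and
`v` a Kleisli map. Hence maps out of `T X` are determined by, and can be defined from, families
indexed by such pairs `(x, v)` which are compatible with the morphisms of `A`.

This gives faithfulness of `ν_T` at once. For fullness, a map of presheaves restricts to a map
of carriers, and naturality with respect to Kleisli maps makes it an algebra map. For the
essential image, if `j_T^* P ≅ ν_A X₀` then the action of `Θ_T` on `P` descends to a structure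
map `T X₀ ⟶ X₀`; its unit and associativity laws are the functoriality of `P` on identities and
on Kleisli composites, and the resulting algebra has nerve `P`.
-/

open Opposite

namespace CategoryTheory.Monad

variable {T : Monad E} {Z Z' Z'' : E} {X Y : T.Algebra}

-- `T.adj.homEquiv Z X` lands in `Z ⟶ T.forget.obj X`; stating it with `X.A` keeps later rewrites
-- syntactic.
def freeHomEquiv (Z : E) (X : T.Algebra) : (T.free.obj Z ⟶ X) ≃ (Z ⟶ X.A) :=
  T.adj.homEquiv Z X

lemma freeHomEquiv_symm_f (x : Z ⟶ X.A) : ((freeHomEquiv Z X).symm x).f = T.map x ≫ X.a := by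
  erw [Adjunction.homEquiv_counit, Algebra.comp_f, adj_counit]
  rfl

lemma free_hom_f (g : T.free.obj Z ⟶ X) : g.f = T.map (freeHomEquiv Z X g) ≫ X.a := by
  conv_lhs => rw [← (freeHomEquiv Z X).symm_apply_apply g]
  exact freeHomEquiv_symm_f _

lemma freeHomEquiv_comp (g : T.free.obj Z ⟶ X) (f : X ⟶ Y) :
    freeHomEquiv Z Y (g ≫ f) = freeHomEquiv Z X g ≫ f.f :=
  T.adj.homEquiv_naturality_right g f

lemma freeHomEquiv_symm_comp (x : Z ⟶ X.A) (f : X ⟶ Y) :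
    freeHomEquiv Z Y ((freeHomEquiv Z X).symm x ≫ f) = x ≫ f.f := by
  rw [freeHomEquiv_comp, Equiv.apply_symm_apply]

lemma free_map_comp_freeHomEquiv_symm (y : Z' ⟶ Z) (x : Z ⟶ X.A) :
    (freeHomEquiv Z' X).symm (y ≫ x) = T.free.map y ≫ (freeHomEquiv Z X).symm x :=
  T.adj.homEquiv_naturality_left_symm y x

def kleisliHom (v : Z' ⟶ T.obj Z) : T.free.obj Z' ⟶ T.free.obj Z :=
  (freeHomEquiv Z' (T.free.obj Z)).symm v

lemma freeHomEquiv_kleisliHom_comp (v : Z' ⟶ T.obj Z) (g : T.free.obj Z ⟶ X) :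
    freeHomEquiv Z' X (kleisliHom v ≫ g) = v ≫ g.f :=
  freeHomEquiv_symm_comp v g

lemma kleisliHom_freeHomEquiv (m : T.free.obj Z' ⟶ T.free.obj Z) :
    kleisliHom (freeHomEquiv Z' (T.free.obj Z) m) = m :=
  (freeHomEquiv Z' (T.free.obj Z)).symm_apply_apply m

lemma kleisliHom_comp_left (y : Z'' ⟶ Z') (v : Z' ⟶ T.obj Z) :
    kleisliHom (y ≫ v) = T.free.map y ≫ kleisliHom v :=
  free_map_comp_freeHomEquiv_symm (X := T.free.obj Z) y v

lemma kleisliHom_comp_right (v : Z' ⟶ T.obj Z'') (y : Z'' ⟶ Z) :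
    kleisliHom (v ≫ T.map y) = kleisliHom v ≫ T.free.map y :=
  T.adj.homEquiv_naturality_right_symm v (T.free.map y)

lemma kleisliHom_kleisli_comp (v : Z'' ⟶ T.obj Z') (v' : Z' ⟶ T.obj Z) :
    kleisliHom (v ≫ T.map v' ≫ T.μ.app Z) = kleisliHom v ≫ kleisliHom v' := by
  have := T.adj.homEquiv_naturality_right_symm (X := Z'') (Y := T.free.obj Z') v (kleisliHom v')
  erw [forget_map, freeHomEquiv_symm_f] at this
  exact this

lemma kleisliHom_unit : kleisliHom (T.η.app Z) = 𝟙 (T.free.obj Z) := by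
  refine (freeHomEquiv Z (T.free.obj Z)).symm_apply_eq.2 ?_
  erw [T.adj.homEquiv_id, adj_unit]

end CategoryTheory.Monad

lemma hom_ext_of_restrictedYoneda_faithful (i : A ⥤ E) [(Presheaf.restrictedYoneda i).Faithful]
    {X Y : E} {f g : X ⟶ Y} (h : ∀ (b : A) (x : i.obj b ⟶ X), x ≫ f = x ≫ g) : f = g :=
  (Presheaf.restrictedYoneda i).map_injective <| by ext b x; exact h b.unop x

def HasArities (i : A ⥤ E) (T : Monad E) : Prop :=
  ∀ X : E, Nonempty
    (IsColimit ((T.toFunctor ⋙ Presheaf.restrictedYoneda i).mapCocone (canCocone i X)))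

namespace HasArities

variable {i : A ⥤ E} {T : Monad E} (hT : HasArities i T)
include hT

lemma exists_factor {X : E} {b : A} (u : i.obj b ⟶ T.obj X) :
    ∃ (a : A) (x : i.obj a ⟶ X) (v : i.obj b ⟶ T.obj (i.obj a)), v ≫ T.map x = u := by
  obtain ⟨hc⟩ := hT X
  obtain ⟨f, v, hv⟩ := Types.jointly_surjective_of_isColimit
    (isColimitOfPreserves ((evaluation Aᵒᵖ (Type v)).obj (op b)) hc) u
  exact ⟨f.left, f.hom, v, hv⟩

lemma hom_ext [(Presheaf.restrictedYoneda i).Faithful] {X Y : E} {f g : T.obj X ⟶ Y}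
    (h : ∀ (a b : A) (x : i.obj a ⟶ X) (v : i.obj b ⟶ T.obj (i.obj a)),
      v ≫ T.map x ≫ f = v ≫ T.map x ≫ g) : f = g := by
  refine hom_ext_of_restrictedYoneda_faithful i fun b u => ?_
  obtain ⟨a, x, v, rfl⟩ := hT.exists_factor u
  simpa only [Category.assoc] using h a b x v

lemma exists_desc [(Presheaf.restrictedYoneda i).Full] {X Z : E}
    (k : ∀ {a b : A}, (i.obj a ⟶ X) → (i.obj b ⟶ T.obj (i.obj a)) → (i.obj b ⟶ Z))
    (hk_left : ∀ {a b b' : A} (u : b' ⟶ b) (x : i.obj a ⟶ X) (v : i.obj b ⟶ T.obj (i.obj a)),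
      k x (i.map u ≫ v) = i.map u ≫ k x v)
    (hk_right : ∀ {a a' b : A} (t : a' ⟶ a) (x : i.obj a ⟶ X) (v : i.obj b ⟶ T.obj (i.obj a')),
      k (i.map t ≫ x) v = k x (v ≫ T.map (i.map t))) :
    ∃ h : T.obj X ⟶ Z, ∀ {a b : A} (x : i.obj a ⟶ X) (v : i.obj b ⟶ T.obj (i.obj a)),
      v ≫ T.map x ≫ h = k x v := by
  obtain ⟨hc⟩ := hT X
  let c : Cocone ((CostructuredArrow.proj i X ⋙ i) ⋙ T.toFunctor ⋙ Presheaf.restrictedYoneda i) :=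
    { pt := (Presheaf.restrictedYoneda i).obj Z
      ι :=
        { app := fun f =>
            { app := fun b => ↾fun v => k f.hom v
              naturality := fun b b' u => by ext v; exact hk_left u.unop f.hom v }
          naturality := fun f f' t => by
            ext b v
            exact (hk_right t.left f'.hom v).symm.trans
              (congrArg (fun x => k x v) (CostructuredArrow.w t)) } }
  obtain ⟨h, hh⟩ := (Presheaf.restrictedYoneda i).map_surjective (hc.desc c)
  refine ⟨h, fun {a b} x v => ?_⟩
  have := types_congr_hom (NatTrans.congr_app (hc.fac c (CostructuredArrow.mk x)) (op b)) v
  rw [← hh] at this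
  exact (Category.assoc _ _ _).symm.trans this

end HasArities

namespace ThetaT

variable {i : A ⥤ E} {T : Monad E}

def ofKleisli {a b : A} (v : i.obj b ⟶ T.obj (i.obj a)) : (jT i T).obj b ⟶ (jT i T).obj a :=
  InducedCategory.homMk (Monad.kleisliHom v)

lemma ofKleisli_comp_left {a b b' : A} (u : b' ⟶ b) (v : i.obj b ⟶ T.obj (i.obj a)) :
    ofKleisli (i.map u ≫ v) = (jT i T).map u ≫ ofKleisli v :=
  InducedCategory.hom_ext (Monad.kleisliHom_comp_left (i.map u) v)

lemma ofKleisli_comp_right {a a' b : A} (v : i.obj b ⟶ T.obj (i.obj a')) (t : a' ⟶ a) :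
    ofKleisli (v ≫ T.map (i.map t)) = ofKleisli v ≫ (jT i T).map t :=
  InducedCategory.hom_ext (Monad.kleisliHom_comp_right v (i.map t))

lemma ofKleisli_kleisli_comp {a a' b : A} (v : i.obj b ⟶ T.obj (i.obj a))
    (v' : i.obj a ⟶ T.obj (i.obj a')) :
    ofKleisli (v ≫ T.map v' ≫ T.μ.app (i.obj a')) = ofKleisli v ≫ ofKleisli v' :=
  InducedCategory.hom_ext (Monad.kleisliHom_kleisli_comp v v')

lemma ofKleisli_unit (a : A) : ofKleisli (T.η.app (i.obj a)) = 𝟙 ((jT i T).obj a) :=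
  InducedCategory.hom_ext Monad.kleisliHom_unit

lemma ofKleisli_freeHomEquiv {a b : A} (m : (jT i T).obj b ⟶ (jT i T).obj a) :
    ofKleisli (Monad.freeHomEquiv (i.obj b) (T.free.obj (i.obj a)) m.hom) = m :=
  InducedCategory.hom_ext (Monad.kleisliHom_freeHomEquiv m.hom)

end ThetaT

section Nerve

variable {i : A ⥤ E} {T : Monad E}

variable (i) in
def restrictedYonedaForgetIso (X : T.Algebra) :
    (Presheaf.restrictedYoneda i).obj X.A ≅
      (jT i T).op ⋙ (Presheaf.restrictedYoneda (iT i T)).obj X :=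
  NatIso.ofComponents (fun b => (Monad.freeHomEquiv (i.obj b.unop) X).symm.toIso)
    (fun u => by ext x; exact Monad.free_map_comp_freeHomEquiv_symm (i.map u.unop) x)

lemma restrictedYoneda_iT_faithful [(Presheaf.restrictedYoneda i).Faithful] :
    (Presheaf.restrictedYoneda (iT i T)).Faithful where
  map_injective {X Y} f g h := by
    ext
    refine hom_ext_of_restrictedYoneda_faithful i fun b x => ?_
    have : (Monad.freeHomEquiv (i.obj b) X).symm x ≫ f =
        (Monad.freeHomEquiv (i.obj b) X).symm x ≫ g :=
      types_congr_hom (NatTrans.congr_app h (op ((jT i T).obj b))) _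
    have := congrArg (Monad.freeHomEquiv (i.obj b) Y) this
    rwa [Monad.freeHomEquiv_symm_comp, Monad.freeHomEquiv_symm_comp] at this

lemma map_comp_a_eq_of_kleisli_natural [(Presheaf.restrictedYoneda i).Faithful]
    (hT : HasArities i T) {X Y : T.Algebra}
    (F : ∀ b : A, (T.free.obj (i.obj b) ⟶ X) → (T.free.obj (i.obj b) ⟶ Y))
    (hF : ∀ {a b : A} (v : i.obj b ⟶ T.obj (i.obj a)) (g : T.free.obj (i.obj a) ⟶ X),
      F b (Monad.kleisliHom v ≫ g) = Monad.kleisliHom v ≫ F a g)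
    (f : X.A ⟶ Y.A) (hf : ∀ (b : A) (g : T.free.obj (i.obj b) ⟶ X),
      Monad.freeHomEquiv _ X g ≫ f = Monad.freeHomEquiv _ Y (F b g)) :
    T.map f ≫ Y.a = X.a ≫ f := by
  refine hT.hom_ext fun a b x v => ?_
  obtain ⟨g, rfl⟩ := (Monad.freeHomEquiv (i.obj a) X).surjective x
  calc v ≫ T.map (Monad.freeHomEquiv _ X g) ≫ T.map f ≫ Y.a
        = v ≫ T.map (Monad.freeHomEquiv _ Y (F a g)) ≫ Y.a := by
        rw [← hf, Functor.map_comp_assoc]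
    _ = Monad.freeHomEquiv _ Y (Monad.kleisliHom v ≫ F a g) := by
        rw [Monad.freeHomEquiv_kleisliHom_comp, Monad.free_hom_f]
    _ = Monad.freeHomEquiv _ X (Monad.kleisliHom v ≫ g) ≫ f := by rw [← hF, hf]
    _ = v ≫ T.map (Monad.freeHomEquiv _ X g) ≫ X.a ≫ f := by
        rw [Monad.freeHomEquiv_kleisliHom_comp, Monad.free_hom_f]
        simp only [Category.assoc]

lemma restrictedYoneda_iT_full [(Presheaf.restrictedYoneda i).Full]
    [(Presheaf.restrictedYoneda i).Faithful] (hT : HasArities i T) :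
    (Presheaf.restrictedYoneda (iT i T)).Full where
  map_surjective {X Y} φ := by
    obtain ⟨f, hf⟩ := (Presheaf.restrictedYoneda i).map_surjective
      ((restrictedYonedaForgetIso i X).hom ≫ Functor.whiskerLeft (jT i T).op φ ≫
        (restrictedYonedaForgetIso i Y).inv)
    have hf' (b : A) (g : T.free.obj (i.obj b) ⟶ X) :
        Monad.freeHomEquiv _ X g ≫ f = Monad.freeHomEquiv _ Y (φ.app (op ((jT i T).obj b)) g) := by
      refine (types_congr_hom (NatTrans.congr_app hf (op b)) (Monad.freeHomEquiv _ X g)).trans ?_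
      exact congrArg (fun g => Monad.freeHomEquiv _ Y (φ.app (op ((jT i T).obj b)) g))
        ((Monad.freeHomEquiv _ X).symm_apply_apply g)
    have hφ {a b : A} (v : i.obj b ⟶ T.obj (i.obj a)) (g : T.free.obj (i.obj a) ⟶ X) :
        φ.app (op ((jT i T).obj b)) (Monad.kleisliHom v ≫ g) =
          Monad.kleisliHom v ≫ φ.app (op ((jT i T).obj a)) g :=
      types_congr_hom (φ.naturality (ThetaT.ofKleisli v).op) g
    refine ⟨⟨f, map_comp_a_eq_of_kleisli_natural hT _ hφ f hf'⟩, ?_⟩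
    ext θ g
    exact (Monad.freeHomEquiv _ Y).injective ((Monad.freeHomEquiv_comp g _).trans (hf' θ.unop g))

end Nerve

section Realization

variable {i : A ⥤ E} {T : Monad E} {P : (ThetaT i T)ᵒᵖ ⥤ Type v} {X₀ : E}
  (ψ : (Presheaf.restrictedYoneda i).obj X₀ ≅ (jT i T).op ⋙ P)

-- The action of `Θ_T` on `P`, transported along `ψ` to generalized elements of `X₀`.
def kleisliAction {a b : A} (x : i.obj a ⟶ X₀) (v : i.obj b ⟶ T.obj (i.obj a)) : i.obj b ⟶ X₀ :=
  ψ.inv.app (op b) (P.map (ThetaT.ofKleisli v).op (ψ.hom.app (op a) x))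

lemma kleisliAction_comp_left {a b b' : A} (u : b' ⟶ b) (x : i.obj a ⟶ X₀)
    (v : i.obj b ⟶ T.obj (i.obj a)) :
    kleisliAction ψ x (i.map u ≫ v) = i.map u ≫ kleisliAction ψ x v := by
  rw [kleisliAction, ThetaT.ofKleisli_comp_left, op_comp, P.map_comp, types_comp_apply]
  exact NatTrans.naturality_apply ψ.inv u.op _

lemma kleisliAction_map_comp {a a' b : A} (t : a' ⟶ a) (x : i.obj a ⟶ X₀)
    (v : i.obj b ⟶ T.obj (i.obj a')) :
    kleisliAction ψ (i.map t ≫ x) v = kleisliAction ψ x (v ≫ T.map (i.map t)) := by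
  rw [kleisliAction, kleisliAction, ThetaT.ofKleisli_comp_right, op_comp, P.map_comp,
    types_comp_apply]
  congr 2
  exact NatTrans.naturality_apply ψ.hom t.op x

lemma kleisliAction_unit {a : A} (x : i.obj a ⟶ X₀) : kleisliAction ψ x (T.η.app (i.obj a)) = x := by
  rw [kleisliAction, ThetaT.ofKleisli_unit, op_id, P.map_id, types_id_apply]
  exact Iso.hom_inv_id_app_apply ψ (op a) x

lemma kleisliAction_kleisli_comp {a a' b : A} (x : i.obj a' ⟶ X₀)
    (v' : i.obj a ⟶ T.obj (i.obj a')) (v : i.obj b ⟶ T.obj (i.obj a)) :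
    kleisliAction ψ x (v ≫ T.map v' ≫ T.μ.app (i.obj a')) =
      kleisliAction ψ (kleisliAction ψ x v') v := by
  rw [kleisliAction, kleisliAction, kleisliAction, ThetaT.ofKleisli_kleisli_comp, op_comp,
    P.map_comp, types_comp_apply, Iso.inv_hom_id_app_apply]

lemma exists_map_comp_eq_kleisliAction [(Presheaf.restrictedYoneda i).Full]
    (hT : HasArities i T) :
    ∃ h : T.obj X₀ ⟶ X₀, ∀ {a b : A} (x : i.obj a ⟶ X₀) (v : i.obj b ⟶ T.obj (i.obj a)),
      v ≫ T.map x ≫ h = kleisliAction ψ x v :=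
  hT.exists_desc (kleisliAction ψ) (kleisliAction_comp_left ψ) (kleisliAction_map_comp ψ)

variable {ψ} {h : T.obj X₀ ⟶ X₀}
  (hh : ∀ {a b : A} (x : i.obj a ⟶ X₀) (v : i.obj b ⟶ T.obj (i.obj a)),
    v ≫ T.map x ≫ h = kleisliAction ψ x v)
include hh

lemma unit_comp_eq_id_of_kleisliAction [(Presheaf.restrictedYoneda i).Faithful] :
    T.η.app X₀ ≫ h = 𝟙 X₀ :=
  hom_ext_of_restrictedYoneda_faithful i fun b x => calc
    x ≫ T.η.app X₀ ≫ h = T.η.app (i.obj b) ≫ T.map x ≫ h := T.η.naturality_assoc x h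
    _ = x ≫ 𝟙 X₀ := by rw [hh, kleisliAction_unit]; exact (Category.comp_id x).symm

lemma mu_comp_eq_of_kleisliAction [(Presheaf.restrictedYoneda i).Faithful] (hT : HasArities i T) :
    T.μ.app X₀ ≫ h = T.map h ≫ h := by
  refine hT.hom_ext fun a b z v => ?_
  obtain ⟨a', x, v', rfl⟩ := hT.exists_factor z
  calc v ≫ T.map (v' ≫ T.map x) ≫ T.μ.app X₀ ≫ h
        = (v ≫ T.map v' ≫ T.μ.app (i.obj a')) ≫ T.map x ≫ h := by
        simp only [Functor.map_comp, Category.assoc, ← T.μ.naturality_assoc, Functor.comp_map]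
    _ = kleisliAction ψ (kleisliAction ψ x v') v := by rw [hh, kleisliAction_kleisli_comp]
    _ = v ≫ T.map (v' ≫ T.map x) ≫ T.map h ≫ h := by
        rw [← hh, ← hh x v']
        simp only [Functor.map_comp, Category.assoc]

variable [(Presheaf.restrictedYoneda i).Faithful] (hT : HasArities i T)

def algebraOfKleisliAction : T.Algebra where
  A := X₀
  a := h
  unit := unit_comp_eq_id_of_kleisliAction hh
  assoc := mu_comp_eq_of_kleisliAction hh hT

lemma algebraOfKleisliAction_naturality {a b : A} (m : (jT i T).obj b ⟶ (jT i T).obj a)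
    (g : T.free.obj (i.obj a) ⟶ algebraOfKleisliAction hh hT) :
    ψ.hom.app (op b) (Monad.freeHomEquiv _ _ (m.hom ≫ g)) =
      P.map m.op (ψ.hom.app (op a) (Monad.freeHomEquiv _ _ g)) := by
  obtain ⟨w, rfl⟩ : ∃ w, ThetaT.ofKleisli w = m := ⟨_, ThetaT.ofKleisli_freeHomEquiv m⟩
  change ψ.hom.app (op b) (Monad.freeHomEquiv _ _ (Monad.kleisliHom w ≫ g)) = _
  rw [Monad.freeHomEquiv_kleisliHom_comp, Monad.free_hom_f]
  exact (congrArg (ψ.hom.app (op b)) (hh _ w)).trans (Iso.inv_hom_id_app_apply ψ _ _)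

def restrictedYonedaAlgebraOfKleisliActionIso :
    (Presheaf.restrictedYoneda (iT i T)).obj (algebraOfKleisliAction hh hT) ≅ P :=
  NatIso.ofComponents
    (fun θ => (Monad.freeHomEquiv (i.obj θ.unop) (algebraOfKleisliAction hh hT)).toIso ≪≫ ψ.app θ)
    fun {θ θ'} m => by
      ext g
      exact algebraOfKleisliAction_naturality hh hT m.unop g

end Realization

lemma essImage_restrictedYoneda_iT_iff {i : A ⥤ E} {T : Monad E}
    [(Presheaf.restrictedYoneda i).Full] [(Presheaf.restrictedYoneda i).Faithful]
    (hT : HasArities i T)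
    (P : (ThetaT i T)ᵒᵖ ⥤ Type v) :
    (Presheaf.restrictedYoneda (iT i T)).essImage P ↔
      (Presheaf.restrictedYoneda i).essImage ((jT i T).op ⋙ P) := by
  refine ⟨fun ⟨X, ⟨e⟩⟩ => ⟨X.A, ⟨restrictedYonedaForgetIso i X ≪≫ Functor.isoWhiskerLeft _ e⟩⟩,
    fun ⟨X₀, ⟨ψ⟩⟩ => ?_⟩
  obtain ⟨h, hh⟩ := exists_map_comp_eq_kleisliAction ψ hT
  exact ⟨_, ⟨restrictedYonedaAlgebraOfKleisliActionIso hh hT⟩⟩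

theorem nerve_theorem_general (i : A ⥤ E) (T : Monad E)
    (hdense : (Presheaf.restrictedYoneda i).Full ∧ (Presheaf.restrictedYoneda i).Faithful)
    (harities : ∀ X : E,
      Nonempty (IsColimit
        ((T.toFunctor ⋙ Presheaf.restrictedYoneda i).mapCocone (canCocone i X)))) :
    ((Presheaf.restrictedYoneda (iT i T)).Full ∧
      (Presheaf.restrictedYoneda (iT i T)).Faithful) ∧
    (∀ P : (ThetaT i T)ᵒᵖ ⥤ Type v,
      (Presheaf.restrictedYoneda (iT i T)).essImage P ↔
        (Presheaf.restrictedYoneda i).essImage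
          (((Functor.whiskeringLeft _ _ (Type v)).obj (jT i T).op).obj P)) := by
  obtain ⟨_, _⟩ := hdense
  exact ⟨⟨restrictedYoneda_iT_full harities, restrictedYoneda_iT_faithful⟩,
    essImage_restrictedYoneda_iT_iff harities⟩

/-- Nerve Theorem: if `A` is a dense generator of `E` and `T` is a
monad with arities `A` (the functor `ν_A ∘ T` sends the canonical `A`-cocones to
colimit cocones in `PSh(A)`), then `Θ_T` is a dense generator of `E^T` (the nerve
`ν_T` is fully faithful), and a presheaf on `Θ_T` lies in the essential image of
`ν_T` iff its restriction along `j_T` lies in the essential image of `ν_A`. -/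
theorem nerve_theorem (i : A ⥤ E) (T : Monad E)
    (hfull : i.Full) (hfaithful : i.Faithful)
    (hdense : (Presheaf.restrictedYoneda i).Full ∧ (Presheaf.restrictedYoneda i).Faithful)
    (harities : ∀ X : E,
      Nonempty (IsColimit
        ((T.toFunctor ⋙ Presheaf.restrictedYoneda i).mapCocone (canCocone i X)))) :
    ((Presheaf.restrictedYoneda (iT i T)).Full ∧
      (Presheaf.restrictedYoneda (iT i T)).Faithful) ∧
    (∀ P : (ThetaT i T)ᵒᵖ ⥤ Type v,
      (Presheaf.restrictedYoneda (iT i T)).essImage P ↔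
        (Presheaf.restrictedYoneda i).essImage
          (((Functor.whiskeringLeft _ _ (Type v)).obj (jT i T).op).obj P)) :=
  nerve_theorem_general i T hdense harities
end

section
/- Let E have a terminal object 1 and R:E→F be a functor. The following are equivalent: (i) R is a local right adjoint (each induced functor R_X:E/X→F/RX has a left adjoint); (ii) for each morphism f:B→RX the category Fact_E(R,f) of factorisations of f through R has an initial object; (iii) the functor R_1:E→F/R1 has a left adjoint; (iv) every f:B→RX factors as R(h)∘g with g R-generic. -/
/-!
`Fact_E(R, f)` is the comma category of `f` under `R_X = Over.post R`, so (i) ⇔ (ii) is the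
criterion "a functor is a right adjoint iff all its comma categories `A ↓ G` have initial
objects", and (iii) is (i) at `X = 1` because `E/1 ≃ E`. Genericity of `g : B → RA` says exactly
that `(g, h)` is initial in `Fact_E(R, R(h) ∘ g)` for every `h` out of `A`, which gives
(iv) ⇒ (ii). For (iii) ⇒ (iv): pushing factorisations forward along any `u : X → Y` reflects
initial objects (two maps out of an initial object into the factorisation `(f, 1_X)` agree), so
the first component of an initial factorisation of `R(!) ∘ f` through `1` is generic.
-/

open CategoryTheory CategoryTheory.Limits

universe v u₁ u₂

variable {E : Type u₁} {F : Type u₂} [Category.{v} E] [Category.{v} F]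

/-- `g : B ⟶ R A` is `R`-generic. -/
def RGeneric (R : E ⥤ F) {B : F} {A : E} (g : B ⟶ R.obj A) : Prop :=
  ∀ {A' X : E} (α : B ⟶ R.obj A') (β : A ⟶ X) (γ : A' ⟶ X),
    g ≫ R.map β = α ≫ R.map γ →
      ∃! δ : A ⟶ A', g ≫ R.map δ = α ∧ δ ≫ γ = β

/-- The factorisation category `Fact_E(R, f)` (no restriction on the middle object). -/
structure FactE (R : E ⥤ F) (B : F) (X : E) (f : B ⟶ R.obj X) where
  a : E
  g : B ⟶ R.obj a
  h : a ⟶ X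
  fac : g ≫ R.map h = f

instance (R : E ⥤ F) (B : F) (X : E) (f : B ⟶ R.obj X) :
    Category (FactE R B X f) where
  Hom o₁ o₂ := {k : o₁.a ⟶ o₂.a // o₁.g ≫ R.map k = o₂.g ∧ k ≫ o₂.h = o₁.h}
  id o := ⟨𝟙 _, by simp⟩
  comp {o₁ o₂ o₃} k l := ⟨k.1 ≫ l.1, by
    obtain ⟨k, hk1, hk2⟩ := k
    obtain ⟨l, hl1, hl2⟩ := l
    constructor
    · simp [← hl1, ← hk1]
    · simp [hk2, hl2]⟩
  id_comp f := by apply Subtype.ext; simp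
  comp_id f := by apply Subtype.ext; simp
  assoc f g h := by apply Subtype.ext; simp

/-- The functor `R_1 : E ⥤ F/R1` induced by a functor `R` when `E` has a terminal
object. -/
noncomputable def Rone (R : E ⥤ F) [HasTerminal E] : E ⥤ Over (R.obj (⊤_ E)) where
  obj Y := Over.mk (R.map (terminal.from Y))
  map {Y Z} f := Over.homMk (R.map f) (by
    dsimp
    rw [← R.map_comp]
    congr 1
    simp)

namespace FactE

variable {R : E ⥤ F} {B : F} {X : E} {f : B ⟶ R.obj X}

@[ext]
lemma hom_ext {o o' : FactE R B X f} {k l : o ⟶ o'} (h : k.1 = l.1) : k = l :=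
  Subtype.ext h

variable (R f) in
def equivStructuredArrow : FactE R B X f ≌ StructuredArrow (Over.mk f) (Over.post R) :=
  .mk
    { obj o := StructuredArrow.mk (Y := Over.mk o.h) (Over.homMk o.g o.fac)
      map k := StructuredArrow.homMk (Over.homMk k.1 k.2.2) (by ext; exact k.2.1) }
    { obj S := ⟨S.right.left, S.hom.left, S.right.hom, Over.w S.hom⟩
      map φ :=
        ⟨φ.right.left, congrArg CommaMorphism.left (StructuredArrow.w φ), Over.w φ.right⟩ }
    (NatIso.ofComponents (fun _ ↦ Iso.refl _) fun _ ↦ by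
      ext; exact (Category.comp_id _).trans (Category.id_comp _).symm)
    (NatIso.ofComponents (fun _ ↦ Iso.refl _) fun _ ↦ by
      ext; exact (Category.comp_id _).trans (Category.id_comp _).symm)

def map {Y : E} {f' : B ⟶ R.obj Y} (u : X ⟶ Y) (hf : f ≫ R.map u = f') :
    FactE R B X f ⥤ FactE R B Y f' where
  obj o := ⟨o.a, o.g, o.h ≫ u, by rw [R.map_comp, ← Category.assoc, o.fac, hf]⟩
  map k := ⟨k.1, k.2.1, by dsimp; rw [reassoc_of% k.2.2]⟩

variable (R f) in
def top : FactE R B X f := ⟨X, f, 𝟙 X, by simp⟩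

def toTop (o : FactE R B X f) : o ⟶ top R f := ⟨o.h, o.fac, Category.comp_id _⟩

def isInitialOfIsInitialMap {Y : E} {f' : B ⟶ R.obj Y} (u : X ⟶ Y) (hf : f ≫ R.map u = f')
    {o : FactE R B X f} (ho : IsInitial ((map u hf).obj o)) : IsInitial o :=
  IsInitial.ofUniqueHom
    (fun o' ↦ ⟨(ho.to ((map u hf).obj o')).1, (ho.to _).2.1,
      congrArg Subtype.val
        (ho.hom_ext (ho.to _ ≫ (map u hf).map o'.toTop) ((map u hf).map o.toTop))⟩)
    (fun _ k ↦ hom_ext (congrArg Subtype.val (ho.hom_ext ((map u hf).map k) (ho.to _)) :))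

end FactE

theorem rGeneric_iff_isInitial (R : E ⥤ F) {B : F} {A : E} (g : B ⟶ R.obj A) :
    RGeneric R g ↔ ∀ {X : E} (h : A ⟶ X),
      Nonempty (IsInitial (⟨A, g, h, rfl⟩ : FactE R B X (g ≫ R.map h))) := by
  constructor
  · intro hg X h
    have H (o : FactE R B X (g ≫ R.map h)) := hg o.g h o.h o.fac.symm
    exact ⟨IsInitial.ofUniqueHom (fun o ↦ ⟨_, (H o).exists.choose_spec⟩)
      fun o k ↦ FactE.hom_ext ((H o).unique k.2 (H o).exists.choose_spec)⟩
  · intro hI A' X α β γ hc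
    obtain ⟨hI⟩ := hI β
    let o : FactE R B X (g ≫ R.map β) := ⟨A', α, γ, hc.symm⟩
    exact ⟨(hI.to o).1, (hI.to o).2,
      fun δ hδ ↦ (congrArg Subtype.val (hI.hom_ext ⟨δ, hδ⟩ (hI.to o)) :)⟩

theorem rGeneric_of_isInitial {R : E ⥤ F} {B : F} {T : E} (hT : IsTerminal T) {f : B ⟶ R.obj T}
    {I : FactE R B T f} (hI : IsInitial I) : RGeneric R I.g := by
  obtain ⟨A, g, k, rfl⟩ := I
  refine (rGeneric_iff_isInitial R g).2 fun {X} h ↦ ?_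
  have hf : (g ≫ R.map h) ≫ R.map (hT.from X) = g ≫ R.map k := by
    rw [Category.assoc, ← R.map_comp, hT.hom_ext (h ≫ hT.from X) k]
  refine ⟨FactE.isInitialOfIsInitialMap (hT.from X) hf ?_⟩
  have : (FactE.map (hT.from X) hf).obj ⟨A, g, h, rfl⟩ = ⟨A, g, k, rfl⟩ := by
    simp only [FactE.map, FactE.mk.injEq, heq_eq_eq, true_and]
    exact hT.hom_ext _ _
  rwa [this]

theorem post_isRightAdjoint_iff_hasInitial_factE (R : E ⥤ F) (X : E) :
    (Over.post R (X := X)).IsRightAdjoint ↔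
      ∀ (B : F) (f : B ⟶ R.obj X), HasInitial (FactE R B X f) := by
  rw [isRightAdjoint_iff_hasInitial_structuredArrow]
  exact ⟨fun h B f ↦ (FactE.equivStructuredArrow R f).hasInitial_iff.2 (h _),
    fun h A ↦ (FactE.equivStructuredArrow R A.hom).hasInitial_iff.1 (h _ _)⟩

theorem rone_isRightAdjoint_iff (R : E ⥤ F) [HasTerminal E] :
    (Rone R).IsRightAdjoint ↔ (Over.post R (X := ⊤_ E)).IsRightAdjoint :=
  -- `Rone R` is definitionally `(Over.equivalenceOfIsTerminal _).inverse ⋙ Over.post R`.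
  Functor.isRightAdjoint_comp_iff_right
    (Over.equivalenceOfIsTerminal terminalIsTerminal).inverse (Over.post R)

theorem exists_rGeneric_factorisation {R : E ⥤ F} {B : F} {T : E} (hT : IsTerminal T)
    (hI : ∀ f : B ⟶ R.obj T, HasInitial (FactE R B T f)) {X : E} (f : B ⟶ R.obj X) :
    ∃ (A : E) (g : B ⟶ R.obj A) (h : A ⟶ X), RGeneric R g ∧ g ≫ R.map h = f := by
  let f' := f ≫ R.map (hT.from X)
  let k := initial.to (⟨X, f, hT.from X, rfl⟩ : FactE R B T f')
  exact ⟨_, _, k.1, rGeneric_of_isInitial hT initialIsInitial, k.2.1⟩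

/-- for `E` with a terminal object and `R : E ⥤ F`, the following are
equivalent: (i) `R` is a local right adjoint; (ii) all factorisation categories
`Fact_E(R,f)` have initial objects; (iii) `R_1 : E ⥤ F/R1` has a left adjoint;
(iv) every `f : B ⟶ R X` admits a generic factorisation. -/
theorem localRightAdjoint_tfae (R : E ⥤ F) [HasTerminal E] :
    [ (∀ X : E, (Over.post R (X := X)).IsRightAdjoint),
      (∀ (B : F) (X : E) (f : B ⟶ R.obj X), HasInitial (FactE R B X f)),
      (Rone R).IsRightAdjoint,
      (∀ (B : F) (X : E) (f : B ⟶ R.obj X),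
        ∃ (A : E) (g : B ⟶ R.obj A) (h : A ⟶ X),
          RGeneric R g ∧ g ≫ R.map h = f) ].TFAE := by
  simp only [post_isRightAdjoint_iff_hasInitial_factE, rone_isRightAdjoint_iff]
  tfae_have 1 ↔ 2 := forall_comm
  tfae_have 3 → 4 := fun h B X f ↦ exists_rGeneric_factorisation terminalIsTerminal (h B) f
  tfae_have 1 → 3 := fun h ↦ h _
  tfae_have 4 → 2 := by
    intro hfac B X f
    obtain ⟨A, g, h, hg, rfl⟩ := hfac B X f
    exact ((rGeneric_iff_isInitial R g).1 hg h).some.hasInitial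
  tfae_finish
end

section
/- For every finite connected acyclic graph p, viewed as an involutive graph, the free groupoid Gp on p is the chaotic (indiscrete) groupoid on its set of vertices: between any two vertices of p there is exactly one reduced path. Consequently the full subcategory of the category of groupoids spanned by the free groupoids on finite connected acyclic graphs is equivalent to the category Δ_sym of nonempty finite sets and all functions. -/
open CategoryTheory

/-- An involutive graph: a graph with an involution on edges exchanging source
and target. -/
structure InvGraph : Type 1 where
  V : Type
  E : Type
  s : E → V
  t : E → V
  ι : E → E
  ι_ι : ∀ e, ι (ι e) = e
  s_ι : ∀ e, s (ι e) = t e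

/-- Morphisms of involutive graphs. -/
structure InvGraph.Hom (X Y : InvGraph) where
  fV : X.V → Y.V
  fE : X.E → Y.E
  s_comm : ∀ e, Y.s (fE e) = fV (X.s e)
  t_comm : ∀ e, Y.t (fE e) = fV (X.t e)
  ι_comm : ∀ e, Y.ι (fE e) = fE (X.ι e)

instance : Category InvGraph where
  Hom := InvGraph.Hom
  id X := ⟨id, id, fun _ => rfl, fun _ => rfl, fun _ => rfl⟩
  comp {X Y Z} f g := ⟨g.fV ∘ f.fV, g.fE ∘ f.fE,
    fun e => by simp [Function.comp, g.s_comm, f.s_comm],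
    fun e => by simp [Function.comp, g.t_comm, f.t_comm],
    fun e => by simp [Function.comp, g.ι_comm, f.ι_comm]⟩
  id_comp f := rfl
  comp_id f := rfl
  assoc f g h := rfl

/-- The forgetful functor from groupoids to involutive graphs, sending a groupoid
to its underlying involutive graph with involution `f ↦ f⁻¹`. -/
def grpdToInv : Grpd.{0,0} ⥤ InvGraph where
  obj G :=
    { V := G.α
      E := Σ a b : G.α, a ⟶ b
      s := fun e => e.1
      t := fun e => e.2.1
      ι := fun e => ⟨e.2.1, e.1, Groupoid.inv e.2.2⟩
      ι_ι := fun e => by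
        obtain ⟨a, b, f⟩ := e
        simp
      s_ι := fun _ => rfl }
  map {G H} F :=
    { fV := F.obj
      fE := fun e => ⟨F.obj e.1, F.obj e.2.1, F.map e.2.2⟩
      s_comm := fun _ => rfl
      t_comm := fun _ => rfl
      ι_comm := fun e => by
        obtain ⟨a, b, f⟩ := e
        simp [Groupoid.inv_eq_inv] }
  map_id G := rfl
  map_comp f g := rfl

/-- The involutive graph associated to a combinatorial graph (a symmetric
relation): a dual pair of edges for each pair of adjacent vertices. -/
def ofSimpleGraph {V : Type} (G : SimpleGraph V) : InvGraph where
  V := V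
  E := {p : V × V // G.Adj p.1 p.2}
  s := fun e => e.1.1
  t := fun e => e.1.2
  ι := fun e => ⟨(e.1.2, e.1.1), e.2.symm⟩
  ι_ι := fun e => rfl
  s_ι := fun e => rfl

/-- The chaotic (indiscrete) groupoid on a type `V`. -/
def Chaotic (V : Type) : Type := V

instance (V : Type) : Groupoid (Chaotic V) where
  Hom _ _ := PUnit
  id _ := ⟨⟩
  comp _ _ := ⟨⟩
  inv _ := ⟨⟩

/-!
A morphism `η` from a graph `G` into the underlying involutive graph of a groupoid `H` extends
to walks in `G`, sending a walk to the composite of the images of its edges. Backtracking along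
an edge contributes `f ≫ f⁻¹ = 𝟙`, so when `G` is acyclic the image of a walk depends only on
its endpoints: every walk reduces to the unique path between them. For a tree this defines a
functor from the chaotic groupoid on the vertices to `H` extending `η`; by the adjunction it is
inverse to the functor from the free groupoid classifying the inclusion of `G` into the chaotic
groupoid. Every nonempty finite set carries a tree (a spanning tree of the complete graph), so the
free groupoids on finite trees are exactly the chaotic groupoids on nonempty finite sets, and
functors between chaotic groupoids are just functions between their objects.
-/

open CategoryTheory SimpleGraph

namespace TreeGroupoid

-- The vertices of `grpdToInv.obj H` are the objects of `H`.
instance (H : Grpd.{0,0}) : Groupoid (grpdToInv.obj H).V := H.str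

section SigmaHom

variable {C : Type} [Groupoid C]

lemma sigma_mk_eqToHom_eq (E : Σ a b : C, a ⟶ b) {a b : C} (p : E.1 = a) (q : E.2.1 = b) :
    (⟨a, b, eqToHom p.symm ≫ E.2.2 ≫ eqToHom q⟩ : Σ a b : C, a ⟶ b) = E := by
  obtain ⟨x, y, f⟩ := E
  subst p q
  simp

lemma eqToHom_comp_comp_eqToHom_inv (E E' : Σ a b : C, a ⟶ b)
    (hE' : E' = ⟨E.2.1, E.1, Groupoid.inv E.2.2⟩)
    {a b : C} (p : E.1 = a) (q : E.2.1 = b) (p' : E'.1 = b) (q' : E'.2.1 = a) :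
    (eqToHom p.symm ≫ E.2.2 ≫ eqToHom q) ≫ (eqToHom p'.symm ≫ E'.2.2 ≫ eqToHom q') = 𝟙 a := by
  subst hE'
  obtain ⟨x, y, f⟩ := E
  subst p q
  simp [Groupoid.inv_eq_inv]

end SigmaHom

lemma InvGraph.hom_ext {X Y : InvGraph} {f g : X ⟶ Y} (hV : f.fV = g.fV) (hE : f.fE = g.fE) :
    f = g := by
  change InvGraph.Hom X Y at f g
  cases f
  cases g
  cases hV
  cases hE
  rfl

section Walks

variable {V : Type} {G : SimpleGraph V} {H : Grpd.{0,0}} (η : ofSimpleGraph G ⟶ grpdToInv.obj H)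

def edgeHom {a b : V} (h : G.Adj a b) : η.fV a ⟶ η.fV b :=
  eqToHom (η.s_comm ⟨(a, b), h⟩).symm ≫ (η.fE ⟨(a, b), h⟩).2.2 ≫ eqToHom (η.t_comm ⟨(a, b), h⟩)

@[simp]
lemma edgeHom_comp_edgeHom_symm {a b : V} (h : G.Adj a b) :
    edgeHom η h ≫ edgeHom η h.symm = 𝟙 (η.fV a) :=
  eqToHom_comp_comp_eqToHom_inv _ _ (η.ι_comm ⟨(a, b), h⟩).symm
    (η.s_comm _) (η.t_comm _) (η.s_comm _) (η.t_comm _)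

def walkHom : ∀ {a b : V}, G.Walk a b → (η.fV a ⟶ η.fV b)
  | _, _, .nil => 𝟙 _
  | _, _, .cons h p => edgeHom η h ≫ walkHom p

@[simp]
lemma walkHom_nil {a : V} : walkHom η (Walk.nil : G.Walk a a) = 𝟙 _ := rfl

@[simp]
lemma walkHom_cons {a b c : V} (h : G.Adj a b) (p : G.Walk b c) :
    walkHom η (.cons h p) = edgeHom η h ≫ walkHom η p := rfl

@[simp]
lemma walkHom_append {a b c : V} (p : G.Walk a b) (q : G.Walk b c) :
    walkHom η (p.append q) = walkHom η p ≫ walkHom η q := by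
  induction p with
  | nil => simp
  | cons h p ih => simp [ih]

lemma walkHom_eq_of_isPath (hG : G.IsAcyclic) {a b : V} (w q : G.Walk a b) (hq : q.IsPath) :
    walkHom η w = walkHom η q := by
  classical
  induction w with
  | nil =>
    obtain rfl : q = .nil := congrArg Subtype.val <|
      (hG.subsingleton_path _ _).elim ⟨q, hq⟩ Path.nil
    rfl
  | @cons a c b h w ih =>
    -- Either `q` starts with the edge `a — c`, or `c — a` followed by `q` is a path.
    by_cases hc : c ∈ q.support
    · have hfirst : q.takeUntil c hc = .cons h .nil := congrArg Subtype.val <|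
        (hG.subsingleton_path a c).elim ⟨_, hq.takeUntil hc⟩ (Path.singleton h)
      rw [← q.take_spec hc, walkHom_append, hfirst, walkHom_cons, walkHom_cons,
        ih _ (hq.dropUntil hc), walkHom_nil, Category.comp_id]
    · have hback : (Walk.cons h.symm q).IsPath := hq.cons hc
      rw [walkHom_cons, ih _ hback, walkHom_cons, ← Category.assoc,
        edgeHom_comp_edgeHom_symm, Category.id_comp]

end Walks

def toChaotic {V : Type} (G : SimpleGraph V) :
    ofSimpleGraph G ⟶ grpdToInv.obj (Grpd.of (Chaotic V)) where
  fV v := v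
  fE e := ⟨e.1.1, e.1.2, ⟨⟩⟩
  s_comm _ := rfl
  t_comm _ := rfl
  ι_comm _ := rfl

section Tree

variable {V : Type} {G : SimpleGraph V} (hG : G.IsTree)

noncomputable def treePath (a b : V) : G.Walk a b :=
  (hG.existsUnique_path a b).exists.choose

lemma treePath_isPath (a b : V) : (treePath hG a b).IsPath :=
  (hG.existsUnique_path a b).exists.choose_spec

variable {H : Grpd.{0,0}} (η : ofSimpleGraph G ⟶ grpdToInv.obj H)

lemma walkHom_eq_treePath {a b : V} (w : G.Walk a b) :
    walkHom η w = walkHom η (treePath hG a b) :=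
  walkHom_eq_of_isPath η hG.isAcyclic w _ (treePath_isPath hG a b)

noncomputable def treeLift : Chaotic V ⥤ H.α where
  obj := η.fV
  map {a b} _ := walkHom η (treePath hG a b)
  map_id _ := (walkHom_eq_treePath hG η .nil).symm
  map_comp {a b c} _ _ :=
    (walkHom_eq_treePath hG η ((treePath hG a b).append (treePath hG b c))).symm.trans
      (walkHom_append η _ _)

lemma toChaotic_comp_treeLift : toChaotic G ≫ grpdToInv.map (treeLift hG η) = η := by
  refine InvGraph.hom_ext rfl (funext fun ⟨(a, b), h⟩ => ?_)
  change (⟨η.fV a, η.fV b, walkHom η (treePath hG a b)⟩ : Σ x y : (grpdToInv.obj H).V, x ⟶ y) =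
    η.fE ⟨(a, b), h⟩
  rw [← walkHom_eq_treePath hG η (.cons h .nil), walkHom_cons, walkHom_nil, Category.comp_id]
  exact sigma_mk_eqToHom_eq _ (η.s_comm ⟨(a, b), h⟩) (η.t_comm ⟨(a, b), h⟩)

end Tree

variable {Fr : InvGraph ⥤ Grpd.{0,0}}

-- `L` is a retraction of the transpose of `g` since both transpose to the unit; it is a section
-- because a functor into a chaotic groupoid is determined by its values on objects.
noncomputable def isoChaoticOfLift (adj : Fr ⊣ grpdToInv)
    {X : InvGraph} {W : Type} (g : X ⟶ grpdToInv.obj (Grpd.of (Chaotic W)))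
    (hg : Function.Surjective g.fV) (L : Grpd.of (Chaotic W) ⟶ Fr.obj X)
    (hL : g ≫ grpdToInv.map L = adj.unit.app X) : Fr.obj X ≅ Grpd.of (Chaotic W) where
  hom := (adj.homEquiv _ _).symm g
  inv := L
  hom_inv_id := by
    apply (adj.homEquiv _ _).injective
    rw [adj.homEquiv_naturality_right, Equiv.apply_symm_apply, hL, adj.homEquiv_id]
  inv_hom_id := by
    have hunit : adj.unit.app X ≫ grpdToInv.map ((adj.homEquiv _ _).symm g) = g := by
      have h := (adj.homEquiv X _).apply_symm_apply g
      rwa [adj.homEquiv_unit] at h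
    refine CategoryTheory.Functor.ext (fun w => ?_) (fun _ _ _ => rfl)
    obtain ⟨x, rfl⟩ := hg w
    have hLx : L.obj (g.fV x) = (adj.unit.app X).fV x := congrFun (congrArg InvGraph.Hom.fV hL) x
    change ((adj.homEquiv _ _).symm g).obj (L.obj (g.fV x)) = g.fV x
    rw [hLx]
    exact congrFun (congrArg InvGraph.Hom.fV hunit) x

noncomputable def freeGroupoidIsoChaotic (adj : Fr ⊣ grpdToInv) {V : Type} {G : SimpleGraph V}
    (hG : G.IsTree) :
    Fr.obj (ofSimpleGraph G) ≅ Grpd.of (Chaotic V) :=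
  isoChaoticOfLift adj (toChaotic G) Function.surjective_id (treeLift hG (adj.unit.app _))
    (toChaotic_comp_treeLift hG _)

def IsFreeOnTree (Fr : InvGraph ⥤ Grpd.{0,0}) (X : Grpd.{0,0}) : Prop :=
  ∃ (V : Type) (_ : Fintype V) (G : SimpleGraph V), G.IsTree ∧
    Nonempty (X ≅ Fr.obj (ofSimpleGraph G))

lemma isFreeOnTree_chaotic (adj : Fr ⊣ grpdToInv) (S : Type) [Finite S] [Nonempty S] :
    IsFreeOnTree Fr (Grpd.of (Chaotic S)) := by
  obtain ⟨T, -, hT⟩ := (connected_top (V := S)).exists_isTree_le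
  exact ⟨S, Fintype.ofFinite S, T, hT, ⟨(freeGroupoidIsoChaotic adj hT).symm⟩⟩

def chaoticMap {A B : Type} (f : A → B) : Chaotic A ⥤ Chaotic B where
  obj := f
  map _ := ⟨⟩

noncomputable def chaoticFunctor (adj : Fr ⊣ grpdToInv) :
    ObjectProperty.FullSubcategory (fun S : FintypeCat.{0} => Nonempty S) ⥤
      ObjectProperty.FullSubcategory (IsFreeOnTree Fr) where
  obj S := ⟨Grpd.of (Chaotic S.obj), have := S.property; isFreeOnTree_chaotic adj S.obj⟩
  map f := ObjectProperty.homMk (chaoticMap f.hom)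

instance : (chaoticFunctor adj).Faithful where
  map_injective h := ObjectProperty.hom_ext _ <|
    FintypeCat.hom_ext _ _ (congrFun (congrArg (fun F => F.hom.obj) h))

instance : (chaoticFunctor adj).Full where
  map_surjective F := ⟨ObjectProperty.homMk (FintypeCat.homMk F.hom.obj),
    ObjectProperty.hom_ext _ (CategoryTheory.Functor.ext (fun _ => rfl) (fun _ _ _ => rfl))⟩

instance : (chaoticFunctor adj).EssSurj where
  mem_essImage X := by
    obtain ⟨V, _, G, hG, ⟨i⟩⟩ := X.property
    have : Nonempty V := hG.connected.nonempty
    exact ⟨⟨FintypeCat.of V, ‹_›⟩,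
      ⟨ObjectProperty.isoMk _ (i ≪≫ freeGroupoidIsoChaotic adj hG).symm⟩⟩

instance : (chaoticFunctor adj).IsEquivalence where

end TreeGroupoid

/-- the free groupoid on a finite connected acyclic graph is the
chaotic groupoid on its vertices (between any two vertices there is exactly one
reduced path), and hence the full subcategory of groupoids spanned by the free
groupoids on finite connected acyclic graphs is equivalent to the category
`Δ_sym` of nonempty finite sets and all functions. -/
theorem free_groupoid_on_tree_chaotic
    (Fr : InvGraph ⥤ Grpd.{0,0}) (adj : Fr ⊣ grpdToInv) :
    (∀ (V : Type) [Fintype V] (G : SimpleGraph V), G.IsTree →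
      (∀ a b : V, ∃! p : G.Walk a b, p.IsPath) ∧
      Nonempty (Fr.obj (ofSimpleGraph G) ≅ Grpd.of (Chaotic V))) ∧
    Nonempty (
      ObjectProperty.FullSubcategory (fun X : Grpd.{0,0} =>
        ∃ (V : Type) (_ : Fintype V) (G : SimpleGraph V), G.IsTree ∧
          Nonempty (X ≅ Fr.obj (ofSimpleGraph G))) ≌
      ObjectProperty.FullSubcategory (fun S : FintypeCat.{0} => Nonempty S)) := by
  refine ⟨fun V _ G hG => ⟨hG.existsUnique_path, ⟨TreeGroupoid.freeGroupoidIsoChaotic adj hG⟩⟩, ?_⟩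
  exact ⟨(TreeGroupoid.chaoticFunctor adj).asEquivalence.symm⟩
end
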